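/- arXiv:2405.08426 — 6 statements merged into one kernel-verified Lean document; each statement's English description precedes it below -/
import Mathlib

section
/- Let R be a ring, G_1,…,G_s finite groups, a_1,…,a_s ∈ R, and for each group B fix a subgroup ω(B) ≤ Aut(B). If for every finite group A one has Σ_i a_i·|FRep_ω(A, G_i)| = 0 (where FRep_ω(A,G_i) is the set of ω(G_i)-orbits on Mono(A,G_i)), then for every finite group A one also has Σ_i a_i·|Rep_ω(A, G_i)| = 0, where Rep_ω(A,G_i) is the set of ω(G_i)-orbits on Hom(A,G_i). -/
/-- The `ω`-orbit equivalence (post-composition by automorphisms in `ω`)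
on `Hom(A,B)`. -/
def repSetoid (A B : Type*) [Group A] [Group B] (ω : Subgroup (MulAut B)) :
    Setoid (A →* B) where
  r f g := ∃ θ ∈ ω, (θ : MulAut B).toMonoidHom.comp f = g
  iseqv := by
    refine ⟨fun f => ⟨1, one_mem ω, by ext a; simp⟩, ?_, ?_⟩
    · rintro f g ⟨θ, hθ, rfl⟩
      exact ⟨θ⁻¹, inv_mem hθ, by ext a; simp⟩
    · rintro f g h ⟨θ, hθ, rfl⟩ ⟨σ, hσ, rfl⟩
      exact ⟨σ * θ, mul_mem hσ hθ, by ext a; simp⟩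

/-- The `ω`-orbit equivalence (post-composition by automorphisms in `ω`)
on `Mono(C,B)`. -/
def frepSetoid (C B : Type*) [Group C] [Group B] (ω : Subgroup (MulAut B)) :
    Setoid {g : C →* B // Function.Injective g} where
  r f g := ∃ θ ∈ ω, (θ : MulAut B).toMonoidHom.comp f.1 = g.1
  iseqv := by
    refine ⟨fun f => ⟨1, one_mem ω, by ext a; simp⟩, ?_, ?_⟩
    · rintro ⟨f, hf⟩ ⟨g, hg⟩ ⟨θ, hθ, h⟩
      exact ⟨θ⁻¹, inv_mem hθ, by rw [← h]; ext a; simp⟩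
    · rintro ⟨f, hf⟩ ⟨g, hg⟩ ⟨k, hk⟩ ⟨θ, hθ, h⟩ ⟨σ, hσ, h'⟩
      exact ⟨σ * θ, mul_mem hσ hθ, by rw [← h', ← h]; ext a; simp⟩

/-! Sending an `ω`-orbit of homomorphisms `f : A →* B` to its kernel `N` is well defined, and
the fibre over `N` is in bijection with `FRep_ω(A ⧸ N, B)` via `g ↦ g ∘ (A → A ⧸ N)`, by the first
isomorphism theorem. Hence `|Rep_ω(A, B)| = ∑_{N ⊴ A} |FRep_ω(A ⧸ N, B)|`, and the combination
`∑ᵢ aᵢ |Rep_ω(A, Gᵢ)|` is a sum over `N ⊴ A` of combinations `∑ᵢ aᵢ |FRep_ω(A ⧸ N, Gᵢ)|`, each of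
which vanishes by hypothesis. -/

instance Subgroup.normal_val {G : Type*} [Group G] (N : {N : Subgroup G // N.Normal}) :
    N.1.Normal :=
  N.2

section
variable {A B : Type*} [Group A] [Group B] (ω : Subgroup (MulAut B))

def repKer : Quotient (repSetoid A B ω) → {N : Subgroup A // N.Normal} :=
  Quotient.lift (fun f => ⟨f.ker, f.normal_ker⟩) <| by
    rintro f g ⟨θ, -, rfl⟩
    ext x
    simp [MonoidHom.mem_ker]

def frepToRep (N : Subgroup A) [N.Normal] :
    Quotient (frepSetoid (A ⧸ N) B ω) → Quotient (repSetoid A B ω) :=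
  Quotient.map (fun g => g.1.comp (QuotientGroup.mk' N)) <| by
    rintro g g' ⟨θ, hθ, hc⟩
    exact ⟨θ, hθ, by rw [← MonoidHom.comp_assoc, hc]⟩

section
variable (N : Subgroup A) [hN : N.Normal]

lemma repKer_frepToRep (q : Quotient (frepSetoid (A ⧸ N) B ω)) :
    repKer ω (frepToRep ω N q) = ⟨N, hN⟩ := by
  induction q using Quotient.inductionOn with
  | h g =>
    ext x
    simp [repKer, frepToRep, MonoidHom.mem_ker, map_eq_one_iff _ g.2]

lemma frepToRep_injective : Function.Injective (frepToRep ω N) := by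
  rintro ⟨g⟩ ⟨g'⟩ hEq
  obtain ⟨θ, hθ, hc⟩ := Quotient.exact hEq
  rw [← MonoidHom.comp_assoc] at hc
  exact Quotient.sound ⟨θ, hθ, (MonoidHom.cancel_right (QuotientGroup.mk'_surjective N)).mp hc⟩

lemma exists_frepToRep_eq {q : Quotient (repSetoid A B ω)} (hq : repKer ω q = ⟨N, hN⟩) :
    ∃ p, frepToRep ω N p = q := by
  induction q using Quotient.inductionOn with
  | h f =>
    obtain rfl : f.ker = N := congrArg Subtype.val hq
    exact ⟨⟦⟨QuotientGroup.kerLift f, QuotientGroup.kerLift_injective f⟩⟧, rfl⟩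

end

noncomputable def frepEquivRepKerFiber (N : Subgroup A) [hN : N.Normal] :
    Quotient (frepSetoid (A ⧸ N) B ω) ≃ {q : Quotient (repSetoid A B ω) // repKer ω q = ⟨N, hN⟩} :=
  Equiv.ofBijective (fun p => ⟨frepToRep ω N p, repKer_frepToRep ω N p⟩)
    ⟨fun _ _ h => frepToRep_injective ω N (congrArg Subtype.val h),
      fun ⟨_, hq⟩ => (exists_frepToRep_eq ω N hq).imp fun _ hp => Subtype.ext hp⟩

noncomputable def repEquivSigmaFrep : Quotient (repSetoid A B ω) ≃
    Σ N : {N : Subgroup A // N.Normal}, Quotient (frepSetoid (A ⧸ N.1) B ω) :=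
  (Equiv.sigmaFiberEquiv (repKer ω)).symm.trans
    (Equiv.sigmaCongrRight fun N => (frepEquivRepKerFiber ω N.1).symm)

lemma card_rep_eq_sum_card_frep [Finite A] [Finite B] [Fintype {N : Subgroup A // N.Normal}] :
    Nat.card (Quotient (repSetoid A B ω)) =
      ∑ N : {N : Subgroup A // N.Normal}, Nat.card (Quotient (frepSetoid (A ⧸ N.1) B ω)) := by
  have (C : Type _) [Group C] [Finite C] : Finite (C →* B) := FunLike.finite _
  rw [Nat.card_congr (repEquivSigmaFrep ω), Nat.card_sigma]
end

/-- If, for every finite group `A`, the combination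
`Σ_i a_i·|FRep_ω(A, G_i)|` vanishes in `R`, then so does
`Σ_i a_i·|Rep_ω(A, G_i)|` for every finite group `A`. -/
theorem rep_vanish_of_frep_vanish {R : Type*} [Ring R] {s : ℕ}
    (G : Fin s → Type) [∀ i, Group (G i)] [∀ i, Finite (G i)] (a : Fin s → R)
    (ω : (B : Type) → [inst : Group B] → Subgroup (MulAut B))
    (h : ∀ (A : Type) [Group A] [Finite A],
      ∑ i, a i * (Nat.card (Quotient (frepSetoid A (G i) (ω (G i)))) : R) = 0) :
    ∀ (A : Type) [Group A] [Finite A],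
      ∑ i, a i * (Nat.card (Quotient (repSetoid A (G i) (ω (G i)))) : R) = 0 := by
  intro A _ _
  have := Fintype.ofFinite {N : Subgroup A // N.Normal}
  simp only [card_rep_eq_sum_card_frep, Nat.cast_sum, Finset.mul_sum]
  rw [Finset.sum_comm]
  exact Finset.sum_eq_zero fun N _ => h (A ⧸ N.1)
end

section
/- Let R be a ring, G_1,…,G_s finite groups, a_1,…,a_s ∈ R, and ω(B) ≤ Aut(B) for each group B. If for every finite group A one has Σ_i a_i·|Rep_ω(A, G_i)| = 0, then for every finite group A one also has Σ_i a_i·|FRep_ω(A, G_i)| = 0. -/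
section FrepAux

instance instFiniteMonoidHomAux (A B : Type*) [Group A] [Group B] [Finite A] [Finite B] :
    Finite (A →* B) :=
  Finite.of_injective (fun f => (f : A → B)) DFunLike.coe_injective

instance instFiniteSubgroupAux (A : Type*) [Group A] [Finite A] : Finite (Subgroup A) :=
  Finite.of_injective (fun K : Subgroup A => (K : Set A)) SetLike.coe_injective

/-- card of FRep is invariant under isomorphism in the first argument. -/
lemma frep_card_congr {A A' B : Type} [Group A] [Group A'] [Group B] (e : A ≃* A')
    (ω : Subgroup (MulAut B)) :
    Nat.card (Quotient (frepSetoid A B ω)) = Nat.card (Quotient (frepSetoid A' B ω)) := by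
  refine Nat.card_congr (Quotient.congr ?_ ?_)
  · exact
      { toFun := fun f => ⟨f.1.comp e.symm.toMonoidHom, f.2.comp e.symm.injective⟩
        invFun := fun f => ⟨f.1.comp e.toMonoidHom, f.2.comp e.injective⟩
        left_inv := fun f => Subtype.ext (MonoidHom.ext fun x => congrArg f.1 (e.symm_apply_apply x))
        right_inv := fun f => Subtype.ext (MonoidHom.ext fun x => congrArg f.1 (e.apply_symm_apply x)) }
  · intro f g
    constructor
    · rintro ⟨θ, hθ, hc⟩
      exact ⟨θ, hθ, MonoidHom.ext fun x => DFunLike.congr_fun hc (e.symm x)⟩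
    · rintro ⟨θ, hθ, hc⟩
      exact ⟨θ, hθ, MonoidHom.ext fun x => by
        simpa using DFunLike.congr_fun hc (e x)⟩

/-- The FRep-count of the quotient by a normal subgroup. -/
noncomputable def quotFrepCard {A : Type} [Group A] (B : Type) [Group B]
    (ω : Subgroup (MulAut B)) (K : {K : Subgroup A // K.Normal}) : ℕ :=
  haveI := K.2
  Nat.card (Quotient (frepSetoid (A ⧸ K.1) B ω))

lemma quotFrepCard_bot {A : Type} [Group A] (B : Type) [Group B] (ω : Subgroup (MulAut B)) :
    quotFrepCard B ω ⟨(⊥ : Subgroup A), inferInstance⟩ =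
      Nat.card (Quotient (frepSetoid A B ω)) :=
  frep_card_congr QuotientGroup.quotientBot ω

end FrepAux

section Decomp

variable {A B : Type} [Group A] [Group B] (ω : Subgroup (MulAut B))

/-- From (K, class of injective hom on A/K) to class of hom on A. -/
noncomputable def toRep (K : {K : Subgroup A // K.Normal}) :
    (haveI := K.2; Quotient (frepSetoid (A ⧸ K.1) B ω)) → Quotient (repSetoid A B ω) :=
  haveI := K.2
  Quotient.lift (fun g => (⟦g.1.comp (QuotientGroup.mk' K.1)⟧ : Quotient (repSetoid A B ω)))
    (by
      rintro g₁ g₂ ⟨θ, hθ, hc⟩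
      exact Quotient.sound ⟨θ, hθ, by rw [← MonoidHom.comp_assoc, hc]⟩)

lemma toRep_bijective :
    Function.Bijective (fun p : Σ K : {K : Subgroup A // K.Normal},
      (haveI := K.2; Quotient (frepSetoid (A ⧸ K.1) B ω)) => toRep ω p.1 p.2) := by
  constructor
  · rintro ⟨⟨K₁, hK₁⟩, q₁⟩ ⟨⟨K₂, hK₂⟩, q₂⟩ hpq
    haveI := hK₁; haveI := hK₂
    obtain ⟨g₁, rfl⟩ := Quotient.exists_rep q₁
    obtain ⟨g₂, rfl⟩ := Quotient.exists_rep q₂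
    obtain ⟨θ, hθ, hc⟩ := Quotient.exact hpq
    have hker : ∀ (K : Subgroup A) (hK : K.Normal)
        (g : {g : (haveI := hK; A ⧸ K) →* B // Function.Injective g}) (φ : B →* B)
        (hφ : Function.Injective φ),
        (φ.comp (g.1.comp (QuotientGroup.mk' K))).ker = K := by
      intro K hK g φ hφ
      ext x
      simp only [MonoidHom.mem_ker, MonoidHom.comp_apply, QuotientGroup.mk'_apply]
      rw [show (1 : B) = φ (g.1 1) by simp, hφ.eq_iff, g.2.eq_iff,
        ← QuotientGroup.mk'_apply, ← MonoidHom.mem_ker, QuotientGroup.ker_mk']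
    have h₁ := hker K₁ hK₁ g₁ (θ : MulAut B).toMonoidHom (θ : MulAut B).injective
    have h₂ := hker K₂ hK₂ g₂ (MonoidHom.id B) (fun _ _ h => h)
    rw [hc] at h₁
    rw [MonoidHom.id_comp] at h₂
    have hK : K₁ = K₂ := h₁.symm.trans h₂
    subst hK
    refine Sigma.ext rfl (heq_of_eq (Quotient.sound ⟨θ, hθ, ?_⟩))
    refine QuotientGroup.monoidHom_ext K₁ ?_
    rw [MonoidHom.comp_assoc]
    exact hc
  · intro x
    obtain ⟨f, rfl⟩ := Quotient.exists_rep x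
    refine ⟨⟨⟨f.ker, inferInstance⟩,
      (⟦⟨QuotientGroup.kerLift f, QuotientGroup.kerLift_injective f⟩⟧ : Quotient (frepSetoid (A ⧸ f.ker) B ω))⟩, ?_⟩
    show (⟦(QuotientGroup.kerLift f).comp (QuotientGroup.mk' f.ker)⟧ : Quotient (repSetoid A B ω)) = ⟦f⟧
    exact congrArg (Quotient.mk (repSetoid A B ω))
      (MonoidHom.ext fun a => QuotientGroup.kerLift_mk f a)

lemma rep_card_eq_sum [Finite A] [Finite B] [Fintype {K : Subgroup A // K.Normal}] :
    Nat.card (Quotient (repSetoid A B ω)) =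
      ∑ K : {K : Subgroup A // K.Normal}, quotFrepCard B ω K := by
  classical
  haveI : ∀ K : {K : Subgroup A // K.Normal},
      Finite (haveI := K.2; Quotient (frepSetoid (A ⧸ K.1) B ω)) := fun K => by
    haveI := K.2
    exact Quotient.finite _
  letI : ∀ K : {K : Subgroup A // K.Normal},
      Fintype (haveI := K.2; Quotient (frepSetoid (A ⧸ K.1) B ω)) := fun K => Fintype.ofFinite _
  rw [← Nat.card_eq_of_bijective _ (toRep_bijective ω)]
  rw [Nat.card_eq_fintype_card, Fintype.card_sigma]
  refine Finset.sum_congr rfl fun K _ => ?_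
  unfold quotFrepCard
  rw [Nat.card_eq_fintype_card]

end Decomp


/-- If, for every finite group `A`, the combination
`Σ_i a_i·|Rep_ω(A, G_i)|` vanishes in `R`, then so does
`Σ_i a_i·|FRep_ω(A, G_i)|` for every finite group `A`. -/
theorem frep_vanish_of_rep_vanish {R : Type*} [Ring R] {s : ℕ}
    (G : Fin s → Type) [∀ i, Group (G i)] [∀ i, Finite (G i)] (a : Fin s → R)
    (ω : (B : Type) → [inst : Group B] → Subgroup (MulAut B))
    (h : ∀ (A : Type) [Group A] [Finite A],
      ∑ i, a i * (Nat.card (Quotient (repSetoid A (G i) (ω (G i)))) : R) = 0) :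
    ∀ (A : Type) [Group A] [Finite A],
      ∑ i, a i * (Nat.card (Quotient (frepSetoid A (G i) (ω (G i)))) : R) = 0 := by
  have key : ∀ n : ℕ, ∀ (A : Type) [Group A] [Finite A], Nat.card A = n →
      ∑ i, a i * (Nat.card (Quotient (frepSetoid A (G i) (ω (G i)))) : R) = 0 := by
    intro n
    induction n using Nat.strong_induction_on with
    | _ n ih =>
      intro A _ _ hn
      classical
      letI : Fintype {K : Subgroup A // K.Normal} := Fintype.ofFinite _
      set b : {K : Subgroup A // K.Normal} → R :=
        fun K => ∑ i, a i * (quotFrepCard (G i) (ω (G i)) K : R) with hb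
      have hsum : ∑ K : {K : Subgroup A // K.Normal}, b K = 0 := by
        rw [Finset.sum_comm]
        calc ∑ i, ∑ K : {K : Subgroup A // K.Normal},
              a i * (quotFrepCard (G i) (ω (G i)) K : R)
            = ∑ i, a i * (Nat.card (Quotient (repSetoid A (G i) (ω (G i)))) : R) := by
              refine Finset.sum_congr rfl fun i _ => ?_
              rw [rep_card_eq_sum, ← Finset.mul_sum, Nat.cast_sum]
          _ = 0 := h A
      have hzero : ∀ K : {K : Subgroup A // K.Normal},
          K ≠ ⟨⊥, inferInstance⟩ → b K = 0 := by
        rintro ⟨K, hK⟩ hne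
        haveI := hK
        have hKbot : K ≠ ⊥ := fun hc => hne (by simp [hc])
        have hlt : Nat.card (A ⧸ K) < n := by
          rw [← hn, Subgroup.card_eq_card_quotient_mul_card_subgroup K]
          have h1 : 1 < Nat.card K := (Subgroup.one_lt_card_iff_ne_bot K).mpr hKbot
          have h2 : 0 < Nat.card (A ⧸ K) := Nat.card_pos
          exact lt_mul_iff_one_lt_right h2 |>.mpr h1
        exact ih _ hlt (A ⧸ K) rfl
      have hbot : b ⟨⊥, inferInstance⟩ = 0 := by
        have := Finset.sum_eq_single_of_mem (⟨⊥, inferInstance⟩ : {K : Subgroup A // K.Normal})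
          (Finset.mem_univ _) (fun K _ hne => hzero K hne)
        rw [← this, hsum]
      rw [hb] at hbot
      simpa only [quotFrepCard_bot] using hbot
  intro A _ _
  exact key (Nat.card A) A rfl
end

section
/- Let R be a ring, {G_1,…,G_s} pairwise non-isomorphic finite groups, and ω(B) ≤ Aut(B) for each group B. Assume |FRep_ω(G_i, G_i)| is not a zero divisor in R for each i. If a_1,…,a_s ∈ R satisfy Σ_i a_i·|Rep_ω(A, G_i)| = 0 for every finite group A, then a_1 = … = a_s = 0. -/
/-!
Sorting homomorphisms `A → B` by their kernel gives `|Rep_ω(A, B)| = Σ_{N ◁ A} |FRep_ω(A/N, B)|`,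
so by induction on `|A|` (Möbius inversion over normal subgroups) the hypothesis upgrades to
`Σ_i a_i |FRep_ω(A, G_i)| = 0` for every finite `A`. If some `a_i ≠ 0`, take such an `i` with
`|G_i|` maximal and `A = G_i`: a monomorphism `G_i → G_j` with `j ≠ i` forces `|G_j| > |G_i|`,
hence `a_j = 0`, so only `a_i |FRep_ω(G_i, G_i)|` survives, contradicting the non-zero-divisor
hypothesis.
-/

open Finset

universe u v

section FRep

variable {A A' B C : Type*} [Group A] [Group A'] [Group B] [Group C]

theorem finite_monoidHom [Finite A] [Finite B] : Finite (A →* B) :=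
  .of_injective _ DFunLike.coe_injective

theorem finite_quotient_frepSetoid [Finite C] [Finite B] (ω : Subgroup (MulAut B)) :
    Finite (Quotient (frepSetoid C B ω)) :=
  have := finite_monoidHom (A := C) (B := B)
  Quotient.finite _

theorem card_quotient_frepSetoid_congr_left (ω : Subgroup (MulAut B)) (e : A ≃* A') :
    Nat.card (Quotient (frepSetoid A B ω)) = Nat.card (Quotient (frepSetoid A' B ω)) := by
  refine Nat.card_congr <| Quotient.congr
    { toFun f := ⟨f.1.comp e.symm.toMonoidHom, f.2.comp e.symm.injective⟩
      invFun f := ⟨f.1.comp e.toMonoidHom, f.2.comp e.injective⟩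
      left_inv f := Subtype.ext <| MonoidHom.ext fun x => by simp
      right_inv f := Subtype.ext <| MonoidHom.ext fun x => by simp } fun f g => ?_
  constructor
  · rintro ⟨θ, hθ, hc⟩
    exact ⟨θ, hθ, MonoidHom.ext fun x => by simpa using DFunLike.congr_fun hc (e.symm x)⟩
  · rintro ⟨θ, hθ, hc⟩
    exact ⟨θ, hθ, MonoidHom.ext fun x => by simpa using DFunLike.congr_fun hc (e x)⟩

theorem card_quotient_frepSetoid_eq_zero [Finite B] (hcard : Nat.card B ≤ Nat.card C)
    (hiso : ¬Nonempty (C ≃* B)) (ω : Subgroup (MulAut B)) :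
    Nat.card (Quotient (frepSetoid C B ω)) = 0 := by
  have : IsEmpty {g : C →* B // Function.Injective g} := ⟨fun ⟨g, hg⟩ =>
    have hC : Nat.card C = Nat.card B := (Nat.card_le_card_of_injective g hg).antisymm hcard
    hiso ⟨MulEquiv.ofBijective g ((Nat.bijective_iff_injective_and_card g).mpr ⟨hg, hC⟩)⟩⟩
  exact Nat.card_of_isEmpty

end FRep

section KernelDecomposition

variable {A B : Type*} [Group A] [Group B]

/-- `FRep_ω(A ⧸ N, B)`, with the normality of `N` carried by `N` itself so that `N` can range
over a sigma type. -/
abbrev FRepQuot (ω : Subgroup (MulAut B)) (N : {N : Subgroup A // N.Normal}) : Type _ :=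
  Quotient (@frepSetoid (A ⧸ N.1) B (@QuotientGroup.Quotient.group A _ N.1 N.2) _ ω)

def repOfFRepQuot (ω : Subgroup (MulAut B)) (p : Σ N, FRepQuot (A := A) ω N) :
    Quotient (repSetoid A B ω) :=
  letI := p.1.2
  Quotient.lift (fun g => ⟦g.1.comp (QuotientGroup.mk' p.1.1)⟧)
    (by rintro _ _ ⟨θ, hθ, hc⟩; exact Quotient.sound ⟨θ, hθ, by rw [← MonoidHom.comp_assoc, hc]⟩) p.2

theorem repOfFRepQuot_injective (ω : Subgroup (MulAut B)) :
    Function.Injective (repOfFRepQuot (A := A) ω) := by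
  rintro ⟨⟨N, hN⟩, q⟩ ⟨⟨M, hM⟩, q'⟩ hqq'
  obtain ⟨⟨g, hg⟩, rfl⟩ := q.exists_rep
  obtain ⟨⟨g', hg'⟩, rfl⟩ := q'.exists_rep
  obtain ⟨θ, hθ, hc⟩ := Quotient.exact hqq'
  obtain rfl : N = M := by
    simpa only [MonoidHom.ker_comp_of_injective _ (θ : MulAut B).toMonoidHom θ.injective,
      MonoidHom.ker_comp_of_injective _ _ hg, MonoidHom.ker_comp_of_injective _ _ hg',
      QuotientGroup.ker_mk'] using congrArg MonoidHom.ker hc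
  refine congrArg (Sigma.mk _) (Quotient.sound ⟨θ, hθ, ?_⟩)
  exact (MonoidHom.cancel_right (QuotientGroup.mk'_surjective N)).mp
    (by rw [MonoidHom.comp_assoc]; exact hc)

theorem repOfFRepQuot_surjective (ω : Subgroup (MulAut B)) :
    Function.Surjective (repOfFRepQuot (A := A) ω) := by
  rintro ⟨f⟩
  exact ⟨⟨⟨f.ker, inferInstance⟩, ⟦⟨QuotientGroup.kerLift f, QuotientGroup.kerLift_injective f⟩⟧⟩,
    congrArg _ (MonoidHom.ext fun x => QuotientGroup.kerLift_mk f x)⟩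

theorem card_quotient_repSetoid_eq_sum [Finite A] [Finite B] (ω : Subgroup (MulAut B))
    [Fintype {N : Subgroup A // N.Normal}] :
    Nat.card (Quotient (repSetoid A B ω)) =
      ∑ N : {N : Subgroup A // N.Normal}, Nat.card (FRepQuot ω N) := by
  have (N : {N : Subgroup A // N.Normal}) : Finite (FRepQuot ω N) :=
    letI := N.2
    finite_quotient_frepSetoid ω
  rw [← Nat.card_sigma, Nat.card_congr (Equiv.ofBijective _
    ⟨repOfFRepQuot_injective ω, repOfFRepQuot_surjective ω⟩)]

end KernelDecomposition

theorem Subgroup.card_quotient_lt {G : Type*} [Group G] [Finite G] (N : Subgroup G) [N.Normal]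
    (h : N ≠ ⊥) : Nat.card (G ⧸ N) < Nat.card G := by
  rw [N.card_eq_card_quotient_mul_card_subgroup]
  exact lt_mul_of_one_lt_right Nat.card_pos (N.one_lt_card_iff_ne_bot.mpr h)

section LinearCombination

variable {R : Type*} [Ring R] {ι : Type*} [Fintype ι] (G : ι → Type v) [∀ i, Group (G i)]
  [∀ i, Finite (G i)] (ω : ∀ i, Subgroup (MulAut (G i))) (a : ι → R)

theorem sum_rep_eq_sum_sum_frepQuot (A : Type u) [Group A] [Finite A]
    [Fintype {N : Subgroup A // N.Normal}] :
    ∑ i, a i * (Nat.card (Quotient (repSetoid A (G i) (ω i))) : R) =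
      ∑ N : {N : Subgroup A // N.Normal}, ∑ i, a i * (Nat.card (FRepQuot (ω i) N) : R) := by
  simp_rw [card_quotient_repSetoid_eq_sum, Nat.cast_sum, mul_sum]
  exact sum_comm

theorem sum_frep_eq_zero_of_sum_rep_eq_zero
    (h : ∀ (A : Type u) [Group A] [Finite A],
      ∑ i, a i * (Nat.card (Quotient (repSetoid A (G i) (ω i))) : R) = 0)
    (A : Type u) [Group A] [Finite A] :
    ∑ i, a i * (Nat.card (Quotient (frepSetoid A (G i) (ω i))) : R) = 0 := by
  suffices ∀ n, ∀ (A : Type u) [Group A] [Finite A], Nat.card A = n →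
      ∑ i, a i * (Nat.card (Quotient (frepSetoid A (G i) (ω i))) : R) = 0 from this _ A rfl
  intro n
  induction n using Nat.strong_induction_on with
  | _ n ih =>
  intro A _ _ hA
  classical
  have := Fintype.ofFinite {N : Subgroup A // N.Normal}
  let bot : {N : Subgroup A // N.Normal} := ⟨⊥, inferInstance⟩
  have hproper : ∀ N ∈ univ.erase bot, ∑ i, a i * (Nat.card (FRepQuot (ω i) N) : R) = 0 := by
    intro N hN
    have := N.2
    have hNbot : N.1 ≠ ⊥ := fun hbot => (mem_erase.mp hN).1 (Subtype.ext hbot)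
    exact ih _ (hA ▸ N.1.card_quotient_lt hNbot) (A ⧸ N.1) rfl
  have hrep := h A
  rw [sum_rep_eq_sum_sum_frepQuot, ← add_sum_erase _ _ (mem_univ bot), sum_eq_zero hproper,
    add_zero] at hrep
  have hbot (i : ι) : Nat.card (FRepQuot (ω i) bot) =
      Nat.card (Quotient (frepSetoid A (G i) (ω i))) :=
    card_quotient_frepSetoid_congr_left _ QuotientGroup.quotientBot
  simpa only [hbot] using hrep

end LinearCombination

/-- If `G_1, …, G_s` are pairwise non-isomorphic finite groups such that each
`|FRep_ω(G_i, G_i)|` is not a zero divisor in `R`, and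
`Σ_i a_i·|Rep_ω(A, G_i)| = 0` for every finite group `A`, then all `a_i = 0`. -/
theorem coeffs_vanish_of_rep_vanish {R : Type*} [Ring R] {s : ℕ}
    (G : Fin s → Type) [∀ i, Group (G i)] [∀ i, Finite (G i)]
    (hpairwise : ∀ i j, i ≠ j → ¬Nonempty (G i ≃* G j))
    (ω : (B : Type) → [inst : Group B] → Subgroup (MulAut B))
    (hnzd : ∀ i, ∀ r : R,
      r * (Nat.card (Quotient (frepSetoid (G i) (G i) (ω (G i)))) : R) = 0 → r = 0)
    (a : Fin s → R)
    (h : ∀ (A : Type) [Group A] [Finite A],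
      ∑ i, a i * (Nat.card (Quotient (repSetoid A (G i) (ω (G i)))) : R) = 0) :
    ∀ i, a i = 0 := by
  classical
  by_contra! hne
  obtain ⟨i, hi, hmax⟩ := (univ.filter (a · ≠ 0)).exists_max_image (fun j => Nat.card (G j))
    (hne.imp fun j hj => mem_filter.mpr ⟨mem_univ j, hj⟩)
  have hsum := sum_frep_eq_zero_of_sum_rep_eq_zero G (fun i => ω (G i)) a h (G i)
  rw [sum_eq_single i ?_ (by simp)] at hsum
  · exact (mem_filter.mp hi).2 (hnzd i _ hsum)
  intro j _ hji
  by_cases haj : a j = 0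
  · rw [haj, zero_mul]
  rw [card_quotient_frepSetoid_eq_zero (hmax j (mem_filter.mpr ⟨mem_univ j, haj⟩))
    (hpairwise i j hji.symm), Nat.cast_zero, mul_zero]
end

section
/- Let G_1,…,G_s be pairwise non-isomorphic finite groups and a_1,…,a_s ∈ ℤ. If for every finite group A one has Σ_i a_i·|Hom(A,G_i)/G_i| = 0, where Hom(A,G_i)/G_i denotes the set of conjugacy classes of homomorphisms A → G_i under the conjugation action of G_i, then all a_i = 0. -/
/-!
Write `e(A, G)` for the number of `G`-conjugacy classes of injective homomorphisms `A → G`.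
Sorting homomorphisms by their kernel gives `|Hom(A, G)/G| = ∑_{N ⊴ A} e(A/N, G)`, so by strong
induction on `|A|` the hypothesis forces `∑ᵢ aᵢ e(A, Gᵢ) = 0` for every finite `A`. Take `A = Gᵢ`
with `|Gᵢ|` maximal among the `i` with `aᵢ ≠ 0`: an injection `Gᵢ → Gⱼ` with `|Gⱼ| ≤ |Gᵢ|` is an
isomorphism, so only the term `aᵢ e(Gᵢ, Gᵢ)` survives, and `e(Gᵢ, Gᵢ) > 0`.
-/

/-- The conjugation-orbit equivalence on `Hom(A,G)`: `f ~ g` iff `g` is a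
conjugate of `f` by some element of `G`. -/
def conjSetoid (A G : Type*) [Group A] [Group G] : Setoid (A →* G) where
  r f g := ∃ c : G, ∀ x : A, c * f x * c⁻¹ = g x
  iseqv := by
    refine ⟨fun f => ⟨1, by simp⟩, ?_, ?_⟩
    · rintro f g ⟨c, hc⟩
      exact ⟨c⁻¹, fun x => by rw [← hc x]; group⟩
    · rintro f g h ⟨c, hc⟩ ⟨d, hd⟩
      exact ⟨d * c, fun x => by rw [← hd x, ← hc x]; group⟩

instance MonoidHom.finite (A G : Type*) [Group A] [Group G] [Finite A] [Finite G] :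
    Finite (A →* G) :=
  .of_injective _ DFunLike.coe_injective

variable {A G : Type*} [Group A] [Group G]

theorem ker_eq_of_conjSetoid {f g : A →* G} (h : conjSetoid A G f g) : f.ker = g.ker := by
  obtain ⟨c, hc⟩ := h
  ext x
  simp [MonoidHom.mem_ker, ← hc x]

variable (A G) in
def kerConjSetoid (N : Subgroup A) : Setoid {f : A →* G // f.ker = N} :=
  (conjSetoid A G).comap Subtype.val

variable (A G) in
noncomputable def injConjCard : ℕ :=
  Nat.card (Quotient (kerConjSetoid A G ⊥))

theorem card_conjClasses_eq_sum_card_kerConj [Finite A] [Finite G] [Fintype (Subgroup A)] :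
    Nat.card (Quotient (conjSetoid A G)) =
      ∑ N : Subgroup A, Nat.card (Quotient (kerConjSetoid A G N)) := by
  let ker : Quotient (conjSetoid A G) → Subgroup A :=
    Quotient.lift MonoidHom.ker fun _ _ => ker_eq_of_conjSetoid
  rw [← Nat.card_sigma]
  exact Nat.card_congr <| (Equiv.sigmaFiberEquiv ker).symm.trans <| .sigmaCongrRight fun N =>
    .subtypeQuotientEquivQuotientSubtype _ (fun q => ker q = N) (fun _ => .rfl) fun _ _ => .rfl

def homWithKerEquivQuotient (N : Subgroup A) [N.Normal] :
    {f : A →* G // f.ker = N} ≃ {g : A ⧸ N →* G // g.ker = ⊥} where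
  toFun f := ⟨QuotientGroup.lift N f.1 f.2.ge, by
    rw [QuotientGroup.ker_lift, f.2, QuotientGroup.map_mk'_self]⟩
  invFun g := ⟨g.1.comp (QuotientGroup.mk' N), by
    rw [← MonoidHom.comap_ker, g.2, MonoidHom.comap_bot, QuotientGroup.ker_mk']⟩
  left_inv _ := rfl
  right_inv g := Subtype.ext <| QuotientGroup.monoidHom_ext N rfl

theorem card_kerConj_eq_injConjCard (N : Subgroup A) [N.Normal] :
    Nat.card (Quotient (kerConjSetoid A G N)) = injConjCard (A ⧸ N) G := by
  refine Nat.card_congr <| Quotient.congr (homWithKerEquivQuotient N) fun f f' => ?_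
  simp only [Setoid.comap_rel]
  constructor
  · rintro ⟨c, hc⟩
    exact ⟨c, fun y => QuotientGroup.induction_on y hc⟩
  · rintro ⟨c, hc⟩
    exact ⟨c, fun x => hc x⟩

theorem card_kerConj_eq_zero_of_not_normal {N : Subgroup A} (hN : ¬N.Normal) :
    Nat.card (Quotient (kerConjSetoid A G N)) = 0 := by
  have : IsEmpty {f : A →* G // f.ker = N} := ⟨fun f => hN (f.2 ▸ f.1.normal_ker)⟩
  simp

theorem injConjCard_eq_zero_of_card_le [Finite A] [Finite G] (hcard : Nat.card G ≤ Nat.card A)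
    (hiso : IsEmpty (A ≃* G)) : injConjCard A G = 0 := by
  have : IsEmpty {f : A →* G // f.ker = ⊥} := ⟨fun f => by
    have hinj : Function.Injective f.1 := (MonoidHom.ker_eq_bot_iff _).mp f.2
    have hbij := (Nat.bijective_iff_injective_and_card f.1).mpr
      ⟨hinj, (Nat.card_le_card_of_injective f.1 hinj).antisymm hcard⟩
    exact hiso.false (MulEquiv.ofBijective f.1 hbij)⟩
  simp [injConjCard]

variable (A) in
theorem injConjCard_self_pos [Finite A] : 0 < injConjCard A A :=
  have : Nonempty (Quotient (kerConjSetoid A A ⊥)) := ⟨⟦⟨.id A, MonoidHom.ker_id⟩⟧⟩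
  Nat.card_pos

theorem sum_injConjCard_eq_zero {ι : Type*} [Fintype ι] (G : ι → Type) [∀ i, Group (G i)]
    [∀ i, Finite (G i)] (a : ι → ℤ)
    (h : ∀ (A : Type) [Group A] [Finite A],
      ∑ i, a i * (Nat.card (Quotient (conjSetoid A (G i))) : ℤ) = 0)
    (A : Type) [Group A] [Finite A] : ∑ i, a i * (injConjCard A (G i) : ℤ) = 0 := by
  induction hn : Nat.card A using Nat.strong_induction_on generalizing A with
  | _ n ih =>
    have : Fintype (Subgroup A) := .ofFinite _
    have hquot (N : Subgroup A) (hN : N ≠ ⊥) :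
        ∑ i, a i * (Nat.card (Quotient (kerConjSetoid A (G i) N)) : ℤ) = 0 := by
      by_cases hnormal : N.Normal
      · have hlt : Nat.card (A ⧸ N) < n := by
          rw [← hn, ← Subgroup.index_eq_card, ← Subgroup.index_bot]
          exact Subgroup.index_strictAnti (bot_lt_iff_ne_bot.mpr hN)
        simpa only [card_kerConj_eq_injConjCard] using ih _ hlt (A ⧸ N) rfl
      · simp [card_kerConj_eq_zero_of_not_normal hnormal]
    calc ∑ i, a i * (injConjCard A (G i) : ℤ)
        = ∑ N : Subgroup A, ∑ i, a i * (Nat.card (Quotient (kerConjSetoid A (G i) N)) : ℤ) :=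
          (Fintype.sum_eq_single ⊥ hquot).symm
      _ = ∑ i, a i * (Nat.card (Quotient (conjSetoid A (G i))) : ℤ) := by
          simp only [Finset.sum_comm (γ := Subgroup A), ← Finset.mul_sum,
            card_conjClasses_eq_sum_card_kerConj, Nat.cast_sum]
      _ = 0 := h A

/-- If `G_1, …, G_s` are pairwise non-isomorphic finite groups and
`Σ_i a_i·|Hom(A,G_i)/G_i| = 0` for every finite group `A` (orbits under the
conjugation action), then all `a_i = 0`. -/
theorem coeffs_vanish_of_conj_classes_vanish {s : ℕ}
    (G : Fin s → Type) [∀ i, Group (G i)] [∀ i, Finite (G i)]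
    (hpairwise : ∀ i j, i ≠ j → ¬Nonempty (G i ≃* G j))
    (a : Fin s → ℤ)
    (h : ∀ (A : Type) [Group A] [Finite A],
      ∑ i, a i * (Nat.card (Quotient (conjSetoid A (G i))) : ℤ) = 0) :
    ∀ i, a i = 0 := by
  by_contra! hne
  obtain ⟨i, hi, hmax⟩ := Finset.exists_max_image {j | a j ≠ 0} (fun j => Nat.card (G j))
    (by simpa [Finset.filter_nonempty_iff] using hne)
  have hsingle : ∑ j, a j * (injConjCard (G i) (G j) : ℤ) = a i * injConjCard (G i) (G i) := by
    refine Fintype.sum_eq_single i fun j hj => ?_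
    by_cases hj0 : a j = 0
    · simp [hj0]
    · rw [injConjCard_eq_zero_of_card_le (hmax j (by simpa using hj0))
        (not_nonempty_iff.mp (hpairwise i j hj.symm)), Nat.cast_zero, mul_zero]
  have hsum := sum_injConjCard_eq_zero G a h (G i)
  rw [hsingle] at hsum
  exact (Finset.mem_filter.mp hi).2 <|
    (mul_eq_zero.mp hsum).resolve_right (by exact_mod_cast (injConjCard_self_pos (G i)).ne')
end

section
/- For any two non-isomorphic finite groups G_1 and G_2, there exists a finite group A such that |Hom(A,G_1)/G_1| ≠ |Hom(A,G_2)/G_2|, where Hom(A,G)/G denotes the set of G-conjugacy orbits of homomorphisms A → G. -/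
open Function

instance {A B : Type*} [MulOneClass A] [MulOneClass B] [Finite A] [Finite B] :
    Finite (A →* B) :=
  DFunLike.finite _

namespace MonoidHom

variable {A B C : Type*} [Group A] [Group B] [Group C]

def surjectiveCongrRight (e : B ≃* C) :
    {f : A →* B // Surjective f} ≃ {f : A →* C // Surjective f} :=
  e.monoidHomCongrRightEquiv.subtypeEquiv fun f => (EquivLike.comp_surjective f e).symm

def rangeEqEquivSurjective (H : Subgroup B) :
    {f : A →* B // f.range = H} ≃ {f : A →* H // Surjective f} where
  toFun f := ⟨f.1.codRestrict H fun x => f.2.le ⟨x, rfl⟩, by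
    rintro ⟨y, hy⟩
    obtain ⟨x, rfl⟩ := f.2.ge hy
    exact ⟨x, rfl⟩⟩
  invFun g := ⟨H.subtype.comp g.1, by
    rw [range_comp, range_eq_top.mpr g.2, ← range_eq_map, Subgroup.range_subtype]⟩
  left_inv _ := rfl
  right_inv _ := rfl

def sigmaSurjectiveEquiv :
    (A →* B) ≃ Σ H : Subgroup B, {f : A →* H // Surjective f} :=
  (Equiv.sigmaFiberEquiv fun f : A →* B => f.range).symm.trans
    (Equiv.sigmaCongrRight rangeEqEquivSurjective)

end MonoidHom

section LinearIndependence

universe u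

variable {I : Type*} [Fintype I] (K : I → Type u) [∀ i, Group (K i)] [∀ i, Finite (K i)]

/-- Test the relation at `A = K i₀` with `K i₀` of minimal order among the `i` with `w i ≠ 0`. -/
theorem eq_zero_of_sum_mul_card_surjective_eq_zero (hK : ∀ i j, Nonempty (K i ≃* K j) → i = j)
    (w : I → ℤ)
    (h : ∀ (A : Type u) [Group A] [Finite A],
      ∑ i, w i * Nat.card {f : A →* K i // Surjective f} = 0) :
    w = 0 := by
  classical
  by_contra hw
  obtain ⟨i₀, hi₀, hmin⟩ := Finset.exists_min_image (Finset.univ.filter (w · ≠ 0))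
    (fun i => Nat.card (K i)) (by simpa [Finset.filter_nonempty_iff, funext_iff] using hw)
  have hid : 0 < Nat.card {f : K i₀ →* K i₀ // Surjective f} :=
    Nat.card_pos_iff.mpr ⟨⟨⟨MonoidHom.id _, surjective_id⟩⟩, inferInstance⟩
  have hother : ∀ i ≠ i₀, w i * Nat.card {f : K i₀ →* K i // Surjective f} = 0 := by
    intro i hi
    by_cases hwi : w i = 0
    · rw [hwi, zero_mul]
    refine mul_eq_zero_of_right _ (Nat.cast_eq_zero.mpr (Nat.card_eq_zero.mpr (Or.inl ?_)))
    refine ⟨fun ⟨f, hf⟩ => hi (hK i i₀ ⟨(MulEquiv.ofBijective f ?_).symm⟩)⟩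
    exact (Nat.bijective_iff_surjective_and_card f).mpr ⟨hf, le_antisymm
      (hmin i (by simpa using hwi)) (Nat.card_le_card_of_surjective f hf)⟩
  have := h (K i₀)
  rw [Finset.sum_eq_single i₀ (fun i _ hi => hother i hi) (by simp)] at this
  exact (Finset.mem_filter.mp hi₀).2 (by simpa [hid.ne'] using this)

def isoSetoid : Setoid I where
  r i j := Nonempty (K i ≃* K j)
  iseqv := ⟨fun _ => ⟨.refl _⟩, fun ⟨e⟩ => ⟨e.symm⟩, fun ⟨e⟩ ⟨e'⟩ => ⟨e.trans e'⟩⟩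

open scoped Classical in
theorem sum_isomorphic_eq_zero_of_sum_mul_card_surjective_eq_zero (w : I → ℤ)
    (h : ∀ (A : Type u) [Group A] [Finite A],
      ∑ i, w i * Nat.card {f : A →* K i // Surjective f} = 0)
    (i₀ : I) :
    ∑ i with Nonempty (K i ≃* K i₀), w i = 0 := by
  let S := isoSetoid K
  let W : Quotient S → ℤ := fun q => ∑ i with ⟦i⟧ = q, w i
  have hW : W = 0 := by
    refine eq_zero_of_sum_mul_card_surjective_eq_zero (fun q => K q.out)
      (fun q q' e => Quotient.out_equiv_out.mp e) W fun A _ _ => ?_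
    rw [← h A, ← Finset.sum_fiberwise Finset.univ (fun i => (⟦i⟧ : Quotient S))]
    refine Finset.sum_congr rfl fun q _ => ?_
    rw [Finset.sum_mul]
    refine Finset.sum_congr rfl fun i hi => ?_
    obtain ⟨e⟩ : Nonempty (K q.out ≃* K i) := (Finset.mem_filter.mp hi).2 ▸ Quotient.mk_out i
    rw [Nat.card_congr (MonoidHom.surjectiveCongrRight e)]
  simpa [W, S, isoSetoid, Quotient.eq] using congrFun hW ⟦i₀⟧

end LinearIndependence

namespace conjSetoid

variable (A G : Type*) [Group A] [Group G]

local instance conjMulAction : MulAction G (A →* G) where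
  smul c f := (MulAut.conj c).toMonoidHom.comp f
  one_smul f := by ext x; change 1 * f x * 1⁻¹ = f x; group
  mul_smul c d f := by ext x; change c * d * f x * (c * d)⁻¹ = c * (d * f x * d⁻¹) * c⁻¹; group

theorem conj_smul_apply (c : G) (f : A →* G) (x : A) : (c • f) x = c * f x * c⁻¹ := rfl

theorem eq_orbitRel : conjSetoid A G = MulAction.orbitRel G (A →* G) := by
  ext f g
  refine ⟨fun ⟨c, hc⟩ => ⟨c⁻¹, ?_⟩, fun ⟨c, hc⟩ => ⟨c⁻¹, fun x => ?_⟩⟩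
  · ext x
    simp [conj_smul_apply, ← hc x, mul_assoc]
  · simp [← hc, conj_smul_apply, mul_assoc]

def fixedByEquivHomCentralizer (c : G) :
    MulAction.fixedBy (A →* G) c ≃ (A →* Subgroup.centralizer {c}) where
  toFun f := f.1.codRestrict _ fun x => Subgroup.mem_centralizer_singleton_iff.mpr <| by
    have := DFunLike.congr_fun f.2 x
    rw [conj_smul_apply, mul_inv_eq_iff_eq_mul] at this
    exact this.symm
  invFun g := ⟨(Subgroup.centralizer {c}).subtype.comp g, by
    ext x
    simp [conj_smul_apply, ← Subgroup.mem_centralizer_singleton_iff.mp (g x).2]⟩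
  left_inv _ := rfl
  right_inv _ := rfl

theorem card_quotient_mul_card [Finite A] [Fintype G] :
    Nat.card (Quotient (conjSetoid A G)) * Nat.card G =
      ∑ c : G, Nat.card (A →* Subgroup.centralizer {c}) := by
  classical
  let := Fintype.ofFinite (A →* G)
  rw [eq_orbitRel, Nat.card_eq_fintype_card, Nat.card_eq_fintype_card,
    ← MulAction.sum_card_fixedBy_eq_card_orbits_mul_card_group]
  exact Finset.sum_congr rfl fun c _ => by
    rw [← Nat.card_eq_fintype_card, Nat.card_congr (fixedByEquivHomCentralizer A G c)]

theorem card_quotient_mul_card_eq_card_sigma_surjective [Finite A] [Finite G] :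
    Nat.card (Quotient (conjSetoid A G)) * Nat.card G =
      Nat.card (Σ p : Σ c : G, Subgroup (Subgroup.centralizer {c}),
        {f : A →* p.2 // Surjective f}) := by
  let := Fintype.ofFinite G
  rw [card_quotient_mul_card, Nat.card_congr (Equiv.sigmaAssoc fun c (H : Subgroup _) =>
    {f : A →* H // Surjective f}), Nat.card_sigma]
  exact Finset.sum_congr rfl fun c _ => Nat.card_congr MonoidHom.sigmaSurjectiveEquiv

variable {A G} in
theorem card_quotient_congr {G' : Type*} [Group G'] (e : G ≃* G') :
    Nat.card (Quotient (conjSetoid A G)) = Nat.card (Quotient (conjSetoid A G')) :=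
  Nat.card_congr <| Quotient.congr e.monoidHomCongrRightEquiv fun f g =>
    e.toEquiv.exists_congr fun c => forall_congr' fun x => by
      simp [← e.injective.eq_iff]

end conjSetoid

theorem exists_injective_of_card_quotient_conjSetoid_eq {B₁ B₂ : Type} [Group B₁] [Group B₂]
    [Finite B₁] [Finite B₂]
    (h : ∀ (A : Type) [Group A] [Finite A],
      Nat.card (Quotient (conjSetoid A B₁)) = Nat.card (Quotient (conjSetoid A B₂))) :
    ∃ φ : B₁ →* B₂, Injective φ := by
  classical
  let := Fintype.ofFinite B₁
  let := Fintype.ofFinite B₂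
  let P₁ := Σ c : B₁, Subgroup (Subgroup.centralizer {c})
  let P₂ := Σ c : B₂, Subgroup (Subgroup.centralizer {c})
  let := fun c : B₁ => Fintype.ofFinite (Subgroup (Subgroup.centralizer {c}))
  let := fun c : B₂ => Fintype.ofFinite (Subgroup (Subgroup.centralizer {c}))
  let K : P₁ ⊕ P₂ → FiniteGrp.{0} := Sum.elim (fun p => .of p.2) (fun p => .of p.2)
  let w : P₁ ⊕ P₂ → ℤ := Sum.elim (fun _ => Nat.card B₂) (fun _ => -Nat.card B₁)
  have hw : ∀ (A : Type) [Group A] [Finite A],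
      ∑ i, w i * Nat.card {f : A →* K i // Surjective f} = 0 := by
    intro A _ _
    have h₁ := conjSetoid.card_quotient_mul_card_eq_card_sigma_surjective A B₁
    have h₂ := conjSetoid.card_quotient_mul_card_eq_card_sigma_surjective A B₂
    rw [Nat.card_sigma] at h₁ h₂
    rw [Fintype.sum_sum_type]
    change (∑ p : P₁, (Nat.card B₂ : ℤ) * Nat.card {f : A →* p.2 // Surjective f}) +
      ∑ p : P₂, -(Nat.card B₁ : ℤ) * Nat.card {f : A →* p.2 // Surjective f} = 0
    rw [← Finset.mul_sum, ← Finset.mul_sum, ← Nat.cast_sum, ← Nat.cast_sum, ← h₁, ← h₂, h A]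
    push_cast
    ring
  -- `K i₀ ≅ B₁`; all weights in its isomorphism class are positive unless it meets `P₂`.
  let i₀ : P₁ ⊕ P₂ := .inl ⟨1, ⊤⟩
  have hclass := sum_isomorphic_eq_zero_of_sum_mul_card_surjective_eq_zero (fun i => K i) w hw i₀
  obtain ⟨⟨c, H⟩, ⟨e⟩⟩ : ∃ p : P₂, Nonempty (K (.inr p) ≃* K i₀) := by
    by_contra! hno
    refine (Finset.sum_pos (fun i hi => ?_)
      ⟨i₀, Finset.mem_filter.mpr ⟨Finset.mem_univ _, ⟨.refl _⟩⟩⟩).ne' hclass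
    rcases i with p | p
    · exact Int.natCast_pos.mpr Nat.card_pos
    · exact ((hno p).false (Finset.mem_filter.mp hi).2.some).elim
  have hcent : Subgroup.centralizer {(1 : B₁)} = ⊤ :=
    Subgroup.centralizer_eq_top_iff_subset.mpr (Set.singleton_subset_iff.mpr (Subgroup.one_mem _))
  let κ : K i₀ ≃* B₁ :=
    Subgroup.topEquiv.trans ((MulEquiv.subgroupCongr hcent).trans Subgroup.topEquiv)
  exact ⟨(Subgroup.centralizer {c}).subtype.comp (H.subtype.comp (e.trans κ).symm.toMonoidHom),
    Subtype.val_injective.comp (Subtype.val_injective.comp (e.trans κ).symm.injective)⟩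

/-- For any two non-isomorphic finite groups `G₁`, `G₂`, there exists a finite
group `A` with `|Hom(A,G₁)/G₁| ≠ |Hom(A,G₂)/G₂|` (conjugation orbits). -/
theorem exists_group_distinguishing_conj_classes
    (G₁ G₂ : Type*) [Group G₁] [Group G₂] [Finite G₁] [Finite G₂]
    (hiso : ¬Nonempty (G₁ ≃* G₂)) :
    ∃ (A : Type) (_ : Group A) (_ : Finite A),
      Nat.card (Quotient (conjSetoid A G₁)) ≠
        Nat.card (Quotient (conjSetoid A G₂)) := by
  by_contra! hcon
  have h (A : Type) [Group A] [Finite A] : Nat.card (Quotient (conjSetoid A (Shrink.{0} G₁))) =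
      Nat.card (Quotient (conjSetoid A (Shrink.{0} G₂))) :=
    (conjSetoid.card_quotient_congr Shrink.mulEquiv).trans
      ((hcon A _ inferInstance).trans (conjSetoid.card_quotient_congr Shrink.mulEquiv).symm)
  obtain ⟨φ, hφ⟩ := exists_injective_of_card_quotient_conjSetoid_eq h
  obtain ⟨ψ, hψ⟩ := exists_injective_of_card_quotient_conjSetoid_eq fun A _ _ => (h A).symm
  have hφ_bij : Bijective φ := (Nat.bijective_iff_injective_and_card φ).mpr ⟨hφ,
    le_antisymm (Nat.card_le_card_of_injective φ hφ) (Nat.card_le_card_of_injective ψ hψ)⟩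
  exact hiso ⟨Shrink.mulEquiv.symm.trans ((MulEquiv.ofBijective φ hφ_bij).trans Shrink.mulEquiv)⟩
end

section
/- Let G ⊆ H be finite groups, X a finite G-set, and Ind_G^H X the induced H-set (the quotient of H × X by (hg, x) ~ (h, gx)). Then for any finitely generated group A with finitely many homomorphisms to each finite group, χ^(A)(X, G) = χ^(A)(Ind_G^H X, H), where χ^(A)(Y,K) = (1/|K|)·Σ_{φ ∈ Hom(A,K)} |Y^{φ(A)}|. -/
/-- The generalized orbifold Euler characteristic
`χ^(B)(X,H) = (1/|H|)·Σ_{φ ∈ Hom(B,H)} |X^{φ(B)}|`. -/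
noncomputable def chiA (B H X : Type*) [Group B] [Group H] [MulAction H X] : ℚ :=
  (∑ᶠ φ : B →* H, (Nat.card {x : X // ∀ b : B, φ b • x = x} : ℚ)) /
    (Nat.card H : ℚ)

/-- The equivalence relation on `H × X` defining the induced `H`-set
`Ind_G^H X`: `(h₁,x₁) ~ (h₂,x₂)` iff there is `g ∈ G` with `h₂ = h₁·g` and
`x₂ = g⁻¹ • x₁`. -/
def indSetoid (H X : Type*) [Group H] (G : Subgroup H) [MulAction G X] :
    Setoid (H × X) where
  r p q := ∃ g : G, q.1 = p.1 * g ∧ q.2 = g⁻¹ • p.2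
  iseqv := by
    refine ⟨fun p => ⟨1, by simp⟩, ?_, ?_⟩
    · rintro ⟨h₁, x₁⟩ ⟨h₂, x₂⟩ ⟨g, h1, h2⟩
      simp only at h1 h2
      refine ⟨g⁻¹, ?_, ?_⟩
      · simp [h1, mul_assoc]
      · simp [h2, smul_smul]
    · rintro ⟨h₁, x₁⟩ ⟨h₂, x₂⟩ ⟨h₃, x₃⟩ ⟨g, h1, h2⟩ ⟨g', h1', h2'⟩
      simp only at h1 h2 h1' h2'
      refine ⟨g * g', ?_, ?_⟩
      · simp [h1, h1', mul_assoc]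
      · simp [h2, h2', smul_smul]

/-- The induced `H`-set `Ind_G^H X = (H × X)/~`. -/
def Ind (H X : Type*) [Group H] (G : Subgroup H) [MulAction G X] : Type _ :=
  Quotient (indSetoid H X G)

/-- The `H`-action on `Ind_G^H X` given by `h • [(h',x)] = [(h·h', x)]`. -/
instance (H X : Type*) [Group H] (G : Subgroup H) [MulAction G X] :
    MulAction H (Ind H X G) where
  smul h := Quotient.map (fun p => (h * p.1, p.2)) (by
    rintro ⟨h₁, x₁⟩ ⟨h₂, x₂⟩ ⟨g, h1, h2⟩
    simp only at h1 h2
    exact ⟨g, by simp [h1, mul_assoc], h2⟩)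
  one_smul q := by
    refine Quotient.inductionOn q (fun p => ?_)
    show Quotient.map _ _ (Quotient.mk _ p) = Quotient.mk _ p
    rw [Quotient.map_mk]
    simp
  mul_smul h h' q := by
    refine Quotient.inductionOn q (fun p => ?_)
    show Quotient.map _ _ (Quotient.mk _ p) =
      Quotient.map _ _ (Quotient.map _ _ (Quotient.mk _ p))
    simp only [Quotient.map_mk, mul_assoc]

section
variable {A H X : Type*} [Group A] [Group H] (G : Subgroup H) [MulAction G X]

/-- Abbreviation for the quotient map onto `Ind H X G`. -/
def indMk (p : H × X) : Ind H X G := Quotient.mk (indSetoid H X G) p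

lemma ind_smul_mk (h : H) (p : H × X) :
    h • indMk G p = indMk G (h * p.1, p.2) := rfl

lemma indMk_out (q : Ind H X G) : indMk G (Quotient.out q) = q := Quotient.out_eq q

/-- For a fixed `ψ : A →* H`, the set of pairs `(h,x)` whose class in
`Ind H X G` is `ψ`-fixed is in bijection with (fixed classes) × G. -/
noncomputable def equivFix (ψ : A →* H) :
    {p : H × X // ∀ a : A, ∃ g : G, ψ a * p.1 = p.1 * (g : H) ∧ g • p.2 = p.2} ≃
      {q : Ind H X G // ∀ a : A, ψ a • q = q} × G where
  toFun p :=
    (⟨indMk G p.1, fun a => by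
      obtain ⟨g, hg1, hg2⟩ := p.2 a
      rw [ind_smul_mk]
      refine Quotient.sound ⟨g⁻¹, ?_, ?_⟩
      · simp only [hg1, InvMemClass.coe_inv, mul_assoc, mul_inv_cancel, mul_one]
      · rw [inv_inv, hg2]⟩,
     ⟨(Quotient.out (indMk G p.1)).1⁻¹ * p.1.1, by
      obtain ⟨g, hg1, hg2⟩ := Quotient.exact ((indMk G p.1).out_eq)
      rw [hg1, inv_mul_cancel_left]
      exact g.2⟩)
  invFun c :=
    ⟨((Quotient.out c.1.1).1 * (c.2 : H), c.2⁻¹ • (Quotient.out c.1.1).2), fun a => by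
      have h1 : ψ a • c.1.1 = c.1.1 := c.1.2 a
      rw [← indMk_out G c.1.1, ind_smul_mk] at h1
      obtain ⟨k, hk1, hk2⟩ := Quotient.exact h1
      simp only at hk1 hk2
      have h3 : ψ a * (Quotient.out c.1.1).1 = (Quotient.out c.1.1).1 * (k : H)⁻¹ := by
        conv_rhs => rw [hk1]
        simp [mul_assoc]
      refine ⟨c.2⁻¹ * k⁻¹ * c.2, ?_, ?_⟩
      · simp only [Subgroup.coe_mul, InvMemClass.coe_inv, ← mul_assoc, h3]
        simp [mul_assoc]
      · have hk2' : k⁻¹ • (Quotient.out c.1.1).2 = (Quotient.out c.1.1).2 := hk2.symm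
        calc (c.2⁻¹ * k⁻¹ * c.2) • c.2⁻¹ • (Quotient.out c.1.1).2
            = (c.2⁻¹ * k⁻¹) • (Quotient.out c.1.1).2 := by
              rw [smul_smul, mul_assoc, mul_inv_cancel, mul_one]
          _ = c.2⁻¹ • (Quotient.out c.1.1).2 := by rw [mul_smul, hk2']⟩
  left_inv p := by
    obtain ⟨g, hg1, hg2⟩ := Quotient.exact ((indMk G p.1).out_eq)
    have hgc : (⟨(Quotient.out (indMk G p.1)).1⁻¹ * p.1.1, by
        rw [hg1, inv_mul_cancel_left]; exact g.2⟩ : G) = g :=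
      Subtype.ext (by
        show (Quotient.out (indMk G p.1)).1⁻¹ * p.1.1 = (g : H)
        rw [hg1, inv_mul_cancel_left])
    refine Subtype.ext (Prod.ext_iff.mpr ⟨?_, ?_⟩)
    · show (Quotient.out (indMk G p.1)).1 * ((Quotient.out (indMk G p.1)).1⁻¹ * p.1.1) = p.1.1
      rw [mul_inv_cancel_left]
    · show (⟨(Quotient.out (indMk G p.1)).1⁻¹ * p.1.1, _⟩ : G)⁻¹ •
        (Quotient.out (indMk G p.1)).2 = p.1.2
      rw [hgc, ← hg2]
  right_inv c := by
    have hm : indMk G ((Quotient.out c.1.1).1 * (c.2 : H), c.2⁻¹ • (Quotient.out c.1.1).2)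
        = c.1.1 := by
      have hrel : (indSetoid H X G).r (Quotient.out c.1.1)
          ((Quotient.out c.1.1).1 * (c.2 : H), c.2⁻¹ • (Quotient.out c.1.1).2) :=
        ⟨c.2, rfl, rfl⟩
      exact (Quotient.sound hrel).symm.trans (indMk_out G c.1.1)
    refine Prod.ext_iff.mpr ⟨Subtype.ext hm, Subtype.ext ?_⟩
    show (Quotient.out (indMk G ((Quotient.out c.1.1).1 * (c.2 : H),
        c.2⁻¹ • (Quotient.out c.1.1).2))).1⁻¹ *
        ((Quotient.out c.1.1).1 * (c.2 : H)) = (c.2 : H)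
    rw [hm, inv_mul_cancel_left]
end
section
variable {A H X : Type*} [Group A] [Group H] (G : Subgroup H) [MulAction G X]

lemma sigma_subtype_ext {ι α : Type*} {p : ι → α → Prop}
    {s t : Σ i, {a : α // p i a}} (h1 : s.1 = t.1) (h2 : (s.2 : α) = (t.2 : α)) :
    s = t := by
  obtain ⟨i, a, ha⟩ := s
  obtain ⟨j, b, hb⟩ := t
  dsimp at h1 h2
  subst h1
  exact congrArg _ (Subtype.ext h2)

/-- Conjugate of a hom into `G` by `h`, as a hom into `H`. -/
def conjHom (h : H) (φ : A →* G) : A →* H where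
  toFun a := h * (φ a : H) * h⁻¹
  map_one' := by simp
  map_mul' a b := by simp [mul_assoc]

lemma conjHom_apply (h : H) (φ : A →* G) (a : A) :
    conjHom G h φ a = h * (φ a : H) * h⁻¹ := rfl

/-- The hom into `G` obtained by conjugating a hom into `H` back by `h⁻¹`. -/
def backHom (ψ : A →* H) (h : H) (hc : ∀ a, h⁻¹ * ψ a * h ∈ G) : A →* G where
  toFun a := ⟨h⁻¹ * ψ a * h, hc a⟩
  map_one' := by
    apply Subtype.ext
    simp
  map_mul' a b := by
    apply Subtype.ext
    simp [mul_assoc]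

lemma backHom_apply_coe (ψ : A →* H) (h : H) (hc : ∀ a, h⁻¹ * ψ a * h ∈ G) (a : A) :
    (backHom G ψ h hc a : H) = h⁻¹ * ψ a * h := rfl

/-- The total-space equivalence: pairs `(φ, (h,x))` with `φ : A →* G` fixing `x`
correspond to pairs `(ψ, (h,x))` with `ψ : A →* H` satisfying the conjugacy
condition. -/
noncomputable def equivSigma :
    (Σ φ : A →* G, {p : H × X // ∀ a : A, φ a • p.2 = p.2}) ≃
      (Σ ψ : A →* H,
        {p : H × X // ∀ a : A, ∃ g : G, ψ a * p.1 = p.1 * (g : H) ∧ g • p.2 = p.2}) where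
  toFun t := ⟨conjHom G (t.2 : H × X).1 t.1, (t.2 : H × X), fun a =>
    ⟨t.1 a, by simp [conjHom_apply, mul_assoc], t.2.2 a⟩⟩
  invFun t :=
    ⟨backHom G t.1 (t.2 : H × X).1 (fun a => by
        obtain ⟨g, hg1, hg2⟩ := t.2.2 a
        rw [mul_assoc, hg1, inv_mul_cancel_left]
        exact g.2),
     (t.2 : H × X), fun a => by
      obtain ⟨g, hg1, hg2⟩ := t.2.2 a
      have hb : backHom G t.1 (t.2 : H × X).1 (fun a => by
          obtain ⟨g, hg1, hg2⟩ := t.2.2 a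
          rw [mul_assoc, hg1, inv_mul_cancel_left]
          exact g.2) a = g := by
        apply Subtype.ext
        rw [backHom_apply_coe, mul_assoc, hg1, inv_mul_cancel_left]
      rw [hb]
      exact hg2⟩
  left_inv t := by
    refine sigma_subtype_ext ?_ rfl
    refine MonoidHom.ext fun a => Subtype.ext ?_
    rw [backHom_apply_coe, conjHom_apply]
    simp [mul_assoc]
  right_inv t := by
    refine sigma_subtype_ext ?_ rfl
    refine MonoidHom.ext fun a => ?_
    rw [conjHom_apply, backHom_apply_coe]
    simp [mul_assoc]
end
lemma natCard_sigma {ι : Type*} [Fintype ι] (f : ι → Type*) [∀ i, Finite (f i)] :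
    Nat.card (Σ i, f i) = ∑ i, Nat.card (f i) := by
  letI : ∀ i, Fintype (f i) := fun i => Fintype.ofFinite _
  rw [Nat.card_eq_fintype_card, Fintype.card_sigma]
  exact Finset.sum_congr rfl fun i _ => (Nat.card_eq_fintype_card).symm

/-- The induction property: for finite groups `G ⊆ H`, a finite `G`-set `X`
and a group `A` with finitely many homomorphisms to `G` and to `H`,
`χ^(A)(X,G) = χ^(A)(Ind_G^H X, H)`. -/
theorem chi_ind (A H X : Type*) [Group A] [Group H] [Finite H]
    (G : Subgroup H) [MulAction G X] [Finite X]
    [Finite (A →* H)] [Finite (A →* G)] :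
    chiA A G X = chiA A H (Ind H X G) := by
  haveI finInd : Finite (Ind H X G) := Quotient.finite _
  letI : Fintype (A →* H) := Fintype.ofFinite _
  letI : Fintype (A →* G) := Fintype.ofFinite _
  have hG0 : (Nat.card G : ℚ) ≠ 0 := by
    exact_mod_cast Nat.card_pos.ne'
  have hH0 : (Nat.card H : ℚ) ≠ 0 := by
    exact_mod_cast Nat.card_pos.ne'
  have e3 : ∀ φ : A →* G, Nat.card {p : H × X // ∀ a : A, φ a • p.2 = p.2}
      = Nat.card H * Nat.card {x : X // ∀ b : A, φ b • x = x} := fun φ => by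
    rw [← Nat.card_prod]
    exact Nat.card_congr
      ⟨fun p => (p.1.1, ⟨p.1.2, p.2⟩), fun q => ⟨(q.1, q.2.1), q.2.2⟩,
        fun p => rfl, fun q => rfl⟩
  have e4 : ∀ ψ : A →* H,
      Nat.card {p : H × X // ∀ a : A, ∃ g : G, ψ a * p.1 = p.1 * (g : H) ∧ g • p.2 = p.2}
      = Nat.card {q : Ind H X G // ∀ b : A, ψ b • q = q} * Nat.card G := fun ψ => by
    rw [← Nat.card_prod]
    exact Nat.card_congr (equivFix G ψ)
  have c1 : Nat.card (Σ φ : A →* G, {p : H × X // ∀ a : A, φ a • p.2 = p.2})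
      = ∑ φ : A →* G, Nat.card {p : H × X // ∀ a : A, φ a • p.2 = p.2} :=
    natCard_sigma _
  have c2 : Nat.card (Σ ψ : A →* H,
        {p : H × X // ∀ a : A, ∃ g : G, ψ a * p.1 = p.1 * (g : H) ∧ g • p.2 = p.2})
      = ∑ ψ : A →* H, Nat.card
        {p : H × X // ∀ a : A, ∃ g : G, ψ a * p.1 = p.1 * (g : H) ∧ g • p.2 = p.2} :=
    natCard_sigma _
  have key : (∑ φ : A →* G, Nat.card {x : X // ∀ b : A, φ b • x = x}) * Nat.card H
      = (∑ ψ : A →* H, Nat.card {x : Ind H X G // ∀ b : A, ψ b • x = x}) * Nat.card G := by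
    calc (∑ φ : A →* G, Nat.card {x : X // ∀ b : A, φ b • x = x}) * Nat.card H
        = ∑ φ : A →* G, Nat.card {p : H × X // ∀ a : A, φ a • p.2 = p.2} := by
          rw [Finset.sum_mul]
          exact Finset.sum_congr rfl fun φ _ => by rw [e3 φ, mul_comm]
      _ = Nat.card (Σ φ : A →* G, {p : H × X // ∀ a : A, φ a • p.2 = p.2}) := c1.symm
      _ = Nat.card (Σ ψ : A →* H,
            {p : H × X // ∀ a : A, ∃ g : G, ψ a * p.1 = p.1 * (g : H) ∧ g • p.2 = p.2}) :=
          Nat.card_congr (equivSigma G).symm.symm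
      _ = ∑ ψ : A →* H, Nat.card
            {p : H × X // ∀ a : A, ∃ g : G, ψ a * p.1 = p.1 * (g : H) ∧ g • p.2 = p.2} := c2
      _ = ∑ ψ : A →* H,
            Nat.card {x : Ind H X G // ∀ b : A, ψ b • x = x} * Nat.card G :=
          Finset.sum_congr rfl fun ψ _ => e4 ψ
      _ = (∑ ψ : A →* H, Nat.card {x : Ind H X G // ∀ b : A, ψ b • x = x}) * Nat.card G :=
          (Finset.sum_mul _ _ _).symm
  unfold chiA
  rw [finsum_eq_sum_of_fintype, finsum_eq_sum_of_fintype, div_eq_div_iff hG0 hH0]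
  exact_mod_cast key
end
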